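/- Fix n ≥ 3, set γ := 2 − 2/n, let α ∈ (0, γ − 1), and let h(t) := (1 − t²)^{−α} for |t| < 1. Let X := ℝ^{n−1} × (−1, 1) ⊆ ℝⁿ and u(x', x_n) := |x'|^γ h(x_n). Then: (a) at every point (x', x_n) ∈ X with x' ≠ 0, u is differentiable with ∇u(x', x_n) = ( γ |x'|^{γ−2} (1 − x_n²)^{−α} x' , 2α |x'|^γ x_n (1 − x_n²)^{−α−1} ); (b) at every point (0, x_n) with |x_n| < 1, u is differentiable with ∇u(0, x_n) = 0; (c) the restriction of ∇u to X̂ := {x ∈ X : x' ≠ 0} is a bijection from X̂ onto Ŷ := (ℝ^{n−1} \ {0}) × ℝ; consequently ∇u(X) = Ŷ ∪ {0}. -/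

import Mathlib

open MeasureTheory Set
open scoped InnerProductSpace ENNReal

/-- `h(t) = (1 − t²)^{−α}`. -/
noncomputable def hPog (α t : ℝ) : ℝ := (1 - t ^ 2) ^ (-α)

/-- The last coordinate `x_n` of `x ∈ ℝⁿ`. -/
def lastCoord (n : ℕ) (hn : 3 ≤ n) (x : EuclideanSpace ℝ (Fin n)) : ℝ :=
  x ⟨n - 1, by omega⟩

/-- The Euclidean norm `|x'|` of the first `n − 1` coordinates of `x ∈ ℝⁿ`. -/
noncomputable def primeNorm (n : ℕ) (x : EuclideanSpace ℝ (Fin n)) : ℝ :=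
  Real.sqrt (∑ i : Fin n, if (i : ℕ) = n - 1 then 0 else x i ^ 2)

/-- The Pogorelov-type function `u(x', x_n) = |x'|^γ h(x_n)` with `γ = 2 − 2/n`. -/
noncomputable def uPog (n : ℕ) (hn : 3 ≤ n) (α : ℝ) (x : EuclideanSpace ℝ (Fin n)) : ℝ :=
  primeNorm n x ^ (2 - 2 / (n : ℝ)) * hPog α (lastCoord n hn x)

/-- The slab `X = ℝ^{n−1} × (−1, 1)`. -/
def XPog (n : ℕ) (hn : 3 ≤ n) : Set (EuclideanSpace ℝ (Fin n)) :=
  {x | lastCoord n hn x ∈ Set.Ioo (-1 : ℝ) 1}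

/-- The explicit gradient
`∇u(x', x_n) = (γ |x'|^{γ−2} (1 − x_n²)^{−α} x', 2α |x'|^γ x_n (1 − x_n²)^{−α−1})`. -/
noncomputable def gradPog (n : ℕ) (hn : 3 ≤ n) (α : ℝ) (x : EuclideanSpace ℝ (Fin n)) :
    EuclideanSpace ℝ (Fin n) :=
  WithLp.toLp 2 fun i =>
    if (i : ℕ) = n - 1 then
      2 * α * primeNorm n x ^ (2 - 2 / (n : ℝ)) * lastCoord n hn x *
        (1 - lastCoord n hn x ^ 2) ^ (-(α + 1))
    else
      (2 - 2 / (n : ℝ)) * primeNorm n x ^ ((2 - 2 / (n : ℝ)) - 2) *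
        (1 - lastCoord n hn x ^ 2) ^ (-α) * x i

open Filter Topology

/-!
Write `x = x' + t e` with `e` the last basis vector and `x' ⊥ e`, and put `r = |x'|`,
`w = 1 - t²`. The map `v ↦ ‖v‖^γ` is differentiable everywhere with derivative
`γ ‖v‖^(γ-2) ⟪v, ·⟫`, which vanishes at `v = 0` because `γ > 1`; the product rule then gives the
gradient at every point of `X`, including those with `x' = 0`.

The gradient sends `x'` to a positive multiple of itself, so it is a bijection `X̂ → Ŷ` as soon
as its profile `(r, t) ↦ (s, b) = (γ r^(γ-1) w^(-α), 2α r^γ t w^(-α-1))` is a bijection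
`(0, ∞) × (-1, 1) → (0, ∞) × ℝ`. Eliminating `r` through `s` turns the second component into
`c s^(γ/(γ-1)) · t w^(-β)` with `c > 0` and `β = (γ-1-α)/(γ-1) > 0`, and `t ↦ t (1-t²)^(-β)` is
an increasing bijection `(-1, 1) → ℝ`.
-/

namespace Pogorelov

lemma one_sub_sq_pos {t : ℝ} (ht : t ∈ Ioo (-1 : ℝ) 1) : 0 < 1 - t ^ 2 := by
  nlinarith [ht.1, ht.2]

lemma hasDerivAt_one_sub_sq_rpow {α t : ℝ} (ht : t ∈ Ioo (-1 : ℝ) 1) :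
    HasDerivAt (fun s : ℝ => (1 - s ^ 2) ^ (-α)) (2 * α * t * (1 - t ^ 2) ^ (-(α + 1))) t := by
  convert ((hasDerivAt_pow 2 t).const_sub 1).rpow_const (p := -α)
    (Or.inl (one_sub_sq_pos ht).ne') using 1
  rw [sub_eq_add_neg (-α), ← neg_add]
  push_cast
  ring

lemma hasDerivAt_mul_one_sub_sq_rpow {β t : ℝ} (ht : t ∈ Ioo (-1 : ℝ) 1) :
    HasDerivAt (fun s : ℝ => s * (1 - s ^ 2) ^ (-β))
      ((1 - t ^ 2) ^ (-β) + 2 * β * t ^ 2 * (1 - t ^ 2) ^ (-(β + 1))) t :=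
  ((hasDerivAt_id' t).fun_mul (hasDerivAt_one_sub_sq_rpow ht)).congr_deriv (by ring)

lemma strictMonoOn_mul_one_sub_sq_rpow {β : ℝ} (hβ : 0 < β) :
    StrictMonoOn (fun t : ℝ => t * (1 - t ^ 2) ^ (-β)) (Ioo (-1) 1) := by
  refine strictMonoOn_of_deriv_pos (convex_Ioo _ _)
    (fun t ht => (hasDerivAt_mul_one_sub_sq_rpow ht).continuousAt.continuousWithinAt)
    fun t ht => ?_
  rw [interior_Ioo] at ht
  have := one_sub_sq_pos ht
  rw [(hasDerivAt_mul_one_sub_sq_rpow ht).deriv]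
  positivity

lemma tendsto_one_sub_sq_rpow_neg_atTop {β t₀ : ℝ} (hβ : 0 < β) (ht₀ : t₀ ^ 2 = 1)
    {l : Filter ℝ} (hl : l ≤ 𝓝 t₀) (hmem : ∀ᶠ t in l, t ∈ Ioo (-1 : ℝ) 1) :
    Tendsto (fun t : ℝ => (1 - t ^ 2) ^ (-β)) l atTop := by
  refine (tendsto_rpow_neg_nhdsGT_zero (neg_neg_of_pos hβ)).comp
    (tendsto_nhdsWithin_iff.2 ⟨?_, hmem.mono fun t ht => ?_⟩)
  · have hc : Continuous fun t : ℝ => 1 - t ^ 2 := by fun_prop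
    exact (hc.tendsto' t₀ 0 (by rw [ht₀, sub_self])).mono_left hl
  · exact one_sub_sq_pos ht

lemma surjOn_mul_one_sub_sq_rpow {β : ℝ} (hβ : 0 < β) :
    SurjOn (fun t : ℝ => t * (1 - t ^ 2) ^ (-β)) (Ioo (-1) 1) univ := by
  have hlt : (-1 : ℝ) < 1 := by norm_num
  have hcont : ContinuousOn (fun t : ℝ => t * (1 - t ^ 2) ^ (-β)) (Ioo (-1) 1) :=
    fun t ht => (hasDerivAt_mul_one_sub_sq_rpow ht).continuousAt.continuousWithinAt
  refine hcont.surjOn_of_tendsto (nonempty_Ioo.2 hlt) ?_ ?_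
  · rw [tendsto_comp_coe_Ioo_atBot (f := fun t : ℝ => t * (1 - t ^ 2) ^ (-β)) hlt]
    exact (tendsto_id.mono_left nhdsWithin_le_nhds).neg_mul_atTop (by norm_num)
      (tendsto_one_sub_sq_rpow_neg_atTop hβ (by norm_num) nhdsWithin_le_nhds
        (Ioo_mem_nhdsGT hlt))
  · rw [tendsto_comp_coe_Ioo_atTop (f := fun t : ℝ => t * (1 - t ^ 2) ^ (-β)) hlt]
    exact (tendsto_id.mono_left nhdsWithin_le_nhds).pos_mul_atTop one_pos
      (tendsto_one_sub_sq_rpow_neg_atTop hβ (by norm_num) nhdsWithin_le_nhds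
        (Ioo_mem_nhdsLT hlt))

lemma axial_eq_mul_radial_rpow {γ α r w s t : ℝ} (hγ : 1 < γ) (hr : 0 < r) (hw : 0 < w)
    (hs : γ * r ^ (γ - 1) * w ^ (-α) = s) :
    2 * α * r ^ γ * t * w ^ (-(α + 1)) =
      2 * α * (γ ^ (γ / (γ - 1)))⁻¹ * s ^ (γ / (γ - 1)) * (t * w ^ (-((γ - 1 - α) / (γ - 1)))) := by
  subst hs
  have hγ1 : γ - 1 ≠ 0 := sub_ne_zero.2 hγ.ne'
  have hpow : (γ * r ^ (γ - 1) * w ^ (-α)) ^ (γ / (γ - 1)) =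
      γ ^ (γ / (γ - 1)) * r ^ γ * w ^ (-α * (γ / (γ - 1))) := by
    rw [Real.mul_rpow (by positivity) (by positivity), Real.mul_rpow (by positivity) (by positivity),
      ← Real.rpow_mul hr.le, ← Real.rpow_mul hw.le, mul_div_cancel₀ _ hγ1]
  have hexp : w ^ (-α * (γ / (γ - 1))) * w ^ (-((γ - 1 - α) / (γ - 1))) = w ^ (-(α + 1)) := by
    rw [← Real.rpow_add hw]
    congr 1
    field_simp
    ring
  have hγp : γ ^ (γ / (γ - 1)) ≠ 0 := (Real.rpow_pos_of_pos (by linarith) _).ne'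
  rw [hpow, ← hexp]
  field_simp

noncomputable def gradProfile (γ α : ℝ) (p : ℝ × ℝ) : ℝ × ℝ :=
  (γ * p.1 ^ (γ - 1) * (1 - p.2 ^ 2) ^ (-α), 2 * α * p.1 ^ γ * p.2 * (1 - p.2 ^ 2) ^ (-(α + 1)))

theorem bijOn_gradProfile {γ α : ℝ} (hγ : 1 < γ) (hα0 : 0 < α) (hα1 : α < γ - 1) :
    BijOn (gradProfile γ α) (Ioi 0 ×ˢ Ioo (-1) 1) (Ioi 0 ×ˢ univ) := by
  have hγ1 : γ - 1 ≠ 0 := sub_ne_zero.2 hγ.ne'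
  have hβ : 0 < (γ - 1 - α) / (γ - 1) := div_pos (by linarith) (by linarith)
  refine ⟨?_, ?_, ?_⟩
  · rintro ⟨r, t⟩ ⟨hr : 0 < r, ht⟩
    have := one_sub_sq_pos ht
    exact mk_mem_prod (show 0 < γ * r ^ (γ - 1) * (1 - t ^ 2) ^ (-α) by positivity) (mem_univ _)
  · rintro ⟨r, t⟩ ⟨hr, ht⟩ ⟨r', t'⟩ ⟨hr', ht'⟩ h
    simp only [gradProfile, Prod.mk.injEq, mem_Ioi] at h hr hr'
    obtain ⟨hs, hb⟩ := h
    have hwt := one_sub_sq_pos ht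
    rw [axial_eq_mul_radial_rpow hγ hr hwt rfl,
      axial_eq_mul_radial_rpow hγ hr' (one_sub_sq_pos ht') hs.symm] at hb
    obtain rfl : t = t' :=
      (strictMonoOn_mul_one_sub_sq_rpow hβ).injOn ht ht' (mul_left_cancel₀ (by positivity) hb)
    have hrr : r ^ (γ - 1) = r' ^ (γ - 1) := by
      have : γ * (1 - t ^ 2) ^ (-α) ≠ 0 := by positivity
      apply mul_left_cancel₀ this
      linear_combination hs
    rw [Real.rpow_left_injOn hγ1 hr.le hr'.le hrr]
  · rintro ⟨s, b⟩ ⟨hs, -⟩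
    simp only [mem_Ioi] at hs
    set κ := 2 * α * (γ ^ (γ / (γ - 1)))⁻¹ * s ^ (γ / (γ - 1))
    have hκ : 0 < κ := by positivity
    obtain ⟨t, ht, hφ⟩ := surjOn_mul_one_sub_sq_rpow hβ (mem_univ (b / κ))
    dsimp only at hφ
    have hwt := one_sub_sq_pos ht
    set r := (s / γ * (1 - t ^ 2) ^ α) ^ (γ - 1)⁻¹
    have hr : 0 < r := by positivity
    have hs' : γ * r ^ (γ - 1) * (1 - t ^ 2) ^ (-α) = s := by
      rw [Real.rpow_inv_rpow (by positivity) hγ1, Real.rpow_neg hwt.le]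
      field_simp
    refine ⟨(r, t), ⟨hr, ht⟩, Prod.ext hs' ?_⟩
    change 2 * α * r ^ γ * t * (1 - t ^ 2) ^ (-(α + 1)) = b
    rw [axial_eq_mul_radial_rpow hγ hr hwt hs', hφ, mul_div_cancel₀ _ hκ.ne']

section InnerProductSpace

variable {E : Type*} [NormedAddCommGroup E] [InnerProductSpace ℝ E] {e : E}

noncomputable def perpProj (e : E) : E →L[ℝ] E :=
  ContinuousLinearMap.id ℝ E - (innerSL ℝ e).smulRight e

lemma perpProj_apply (x : E) : perpProj e x = x - ⟪e, x⟫_ℝ • e := rfl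

lemma perpProj_add_inner_smul (x : E) : perpProj e x + ⟪e, x⟫_ℝ • e = x :=
  sub_add_cancel _ _

lemma inner_perpProj (he : ‖e‖ = 1) (x : E) : ⟪e, perpProj e x⟫_ℝ = 0 := by
  simp [perpProj_apply, inner_sub_right, inner_smul_right, he]

lemma perpProj_self (he : ‖e‖ = 1) : perpProj e e = 0 := by
  simp [perpProj_apply, he]

lemma perpProj_perpProj (he : ‖e‖ = 1) (x : E) : perpProj e (perpProj e x) = perpProj e x := by
  rw [perpProj_apply (perpProj e x), inner_perpProj he, zero_smul, sub_zero]

lemma inner_perpProj_perpProj (he : ‖e‖ = 1) (x y : E) :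
    ⟪perpProj e x, perpProj e y⟫_ℝ = ⟪perpProj e x, y⟫_ℝ := by
  rw [perpProj_apply y, inner_sub_right, inner_smul_right, real_inner_comm e, inner_perpProj he,
    mul_zero, sub_zero]

lemma eq_of_perpProj_eq_of_inner_eq {x z : E} (hP : perpProj e x = perpProj e z)
    (hi : ⟪e, x⟫_ℝ = ⟪e, z⟫_ℝ) : x = z := by
  rw [← perpProj_add_inner_smul x, ← perpProj_add_inner_smul z, hP, hi]

theorem hasGradientAt_norm_perpProj_rpow_mul [CompleteSpace E] (he : ‖e‖ = 1) {γ : ℝ}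
    (hγ : 1 < γ) {g : ℝ → ℝ} {g' : ℝ} {x : E} (hg : HasDerivAt g g' ⟪e, x⟫_ℝ) :
    HasGradientAt (fun y => ‖perpProj e y‖ ^ γ * g ⟪e, y⟫_ℝ)
      ((γ * ‖perpProj e x‖ ^ (γ - 2) * g ⟪e, x⟫_ℝ) • perpProj e x +
        (‖perpProj e x‖ ^ γ * g') • e) x := by
  have hP := (hasFDerivAt_norm_rpow (perpProj e x) hγ).comp x (perpProj e).hasFDerivAt
  have hg' := hg.comp_hasFDerivAt x (innerSL ℝ e).hasFDerivAt
  rw [hasGradientAt_iff_hasFDerivAt]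
  refine (hP.mul hg').congr_fderiv ?_
  ext y
  simp only [Function.comp_apply, ContinuousLinearMap.smul_comp, add_apply,
    smul_apply, coe_innerSL_apply, smul_eq_mul,
    ContinuousLinearMap.comp_apply, inner_perpProj_perpProj he, map_add, map_smul,
    InnerProductSpace.toDual_apply_apply]
  ring

noncomputable def grad (γ α : ℝ) (e x : E) : E :=
  (γ * ‖perpProj e x‖ ^ (γ - 2) * (1 - ⟪e, x⟫_ℝ ^ 2) ^ (-α)) • perpProj e x +
    (2 * α * ‖perpProj e x‖ ^ γ * ⟪e, x⟫_ℝ * (1 - ⟪e, x⟫_ℝ ^ 2) ^ (-(α + 1))) • e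

theorem hasGradientAt_grad [CompleteSpace E] (he : ‖e‖ = 1) {γ α : ℝ} (hγ : 1 < γ) {x : E}
    (hx : ⟪e, x⟫_ℝ ∈ Ioo (-1 : ℝ) 1) :
    HasGradientAt (fun y => ‖perpProj e y‖ ^ γ * (1 - ⟪e, y⟫_ℝ ^ 2) ^ (-α)) (grad γ α e x) x := by
  convert hasGradientAt_norm_perpProj_rpow_mul he hγ (hasDerivAt_one_sub_sq_rpow (α := α) hx)
    using 1
  simp only [grad]
  ring_nf

lemma grad_eq_zero {γ α : ℝ} (hγ : 0 < γ) {x : E} (hx : perpProj e x = 0) :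
    grad γ α e x = 0 := by
  simp [grad, hx, Real.zero_rpow hγ.ne']

lemma perpProj_grad (he : ‖e‖ = 1) (γ α : ℝ) (x : E) :
    perpProj e (grad γ α e x) =
      (γ * ‖perpProj e x‖ ^ (γ - 2) * (1 - ⟪e, x⟫_ℝ ^ 2) ^ (-α)) • perpProj e x := by
  simp [grad, perpProj_perpProj he, perpProj_self he]

lemma inner_grad (he : ‖e‖ = 1) (γ α : ℝ) (x : E) :
    ⟪e, grad γ α e x⟫_ℝ =
      2 * α * ‖perpProj e x‖ ^ γ * ⟪e, x⟫_ℝ * (1 - ⟪e, x⟫_ℝ ^ 2) ^ (-(α + 1)) := by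
  simp [grad, inner_add_right, inner_smul_right, inner_perpProj he, he]

lemma gradProfile_norm_perpProj_inner (he : ‖e‖ = 1) {γ : ℝ} (hγ : 0 < γ) (α : ℝ) {x : E}
    (hx : ⟪e, x⟫_ℝ ∈ Ioo (-1 : ℝ) 1) (hPx : perpProj e x ≠ 0) :
    gradProfile γ α (‖perpProj e x‖, ⟪e, x⟫_ℝ) =
      (‖perpProj e (grad γ α e x)‖, ⟪e, grad γ α e x⟫_ℝ) := by
  have := one_sub_sq_pos hx
  have hr : ‖perpProj e x‖ ≠ 0 := norm_ne_zero_iff.2 hPx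
  rw [perpProj_grad he, inner_grad he, norm_smul, Real.norm_of_nonneg (by positivity)]
  refine Prod.ext ?_ rfl
  have hpow : ‖perpProj e x‖ ^ (γ - 2) * ‖perpProj e x‖ = ‖perpProj e x‖ ^ (γ - 1) := by
    rw [← Real.rpow_add_one hr]
    ring_nf
  simp only [gradProfile, ← hpow]
  ring

theorem bijOn_grad (he : ‖e‖ = 1) {γ α : ℝ} (hγ : 1 < γ) (hα0 : 0 < α) (hα1 : α < γ - 1) :
    BijOn (grad γ α e) {x | ⟪e, x⟫_ℝ ∈ Ioo (-1 : ℝ) 1 ∧ perpProj e x ≠ 0}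
      {y | perpProj e y ≠ 0} := by
  have hprofile := bijOn_gradProfile hγ hα0 hα1
  have hγ0 : 0 < γ := by linarith
  refine ⟨?_, ?_, ?_⟩
  · rintro x ⟨hx, hPx⟩
    have := one_sub_sq_pos hx
    have hr : 0 < ‖perpProj e x‖ := norm_pos_iff.2 hPx
    change perpProj e (grad γ α e x) ≠ 0
    rw [perpProj_grad he]
    exact smul_ne_zero (by positivity) hPx
  · rintro x ⟨hx, hPx⟩ z ⟨hz, hPz⟩ hxz
    have hpx := gradProfile_norm_perpProj_inner he hγ0 α hx hPx
    rw [hxz, ← gradProfile_norm_perpProj_inner he hγ0 α hz hPz] at hpx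
    obtain ⟨hr, ht⟩ := Prod.mk.inj <|
      hprofile.injOn (mk_mem_prod (norm_pos_iff.2 hPx) hx) (mk_mem_prod (norm_pos_iff.2 hPz) hz) hpx
    have hP := congrArg (perpProj e) hxz
    rw [perpProj_grad he, perpProj_grad he, hr, ht] at hP
    have := one_sub_sq_pos hz
    have := norm_pos_iff.2 hPz
    exact eq_of_perpProj_eq_of_inner_eq (smul_right_injective E (by positivity) hP) ht
  · intro y hPy
    have hs : 0 < ‖perpProj e y‖ := norm_pos_iff.2 hPy
    obtain ⟨⟨r, t⟩, ⟨hr, ht⟩, hrt⟩ :=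
      hprofile.surjOn (mk_mem_prod hs (mem_univ ⟪e, y⟫_ℝ))
    change 0 < r at hr
    change t ∈ Ioo (-1 : ℝ) 1 at ht
    obtain ⟨hrs, hbt⟩ := Prod.mk.inj hrt
    set x := (r / ‖perpProj e y‖) • perpProj e y + t • e
    have hPx : perpProj e x = (r / ‖perpProj e y‖) • perpProj e y := by
      simp [x, perpProj_perpProj he, perpProj_self he]
    have hex : ⟪e, x⟫_ℝ = t := by
      simp [x, inner_add_right, inner_smul_right, inner_perpProj he, he]
    have hnx : ‖perpProj e x‖ = r := by
      rw [hPx, norm_smul, Real.norm_of_nonneg (by positivity), div_mul_cancel₀ _ hs.ne']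
    refine ⟨x, ⟨hex ▸ ht, hPx ▸ smul_ne_zero (by positivity) hPy⟩, ?_⟩
    refine eq_of_perpProj_eq_of_inner_eq ?_ (by rw [inner_grad he, hnx, hex]; exact hbt)
    have := one_sub_sq_pos ht
    have hc : γ * r ^ (γ - 2) * (1 - t ^ 2) ^ (-α) * (r / ‖perpProj e y‖) = 1 := by
      rw [show γ - 2 = γ - 1 - 1 by ring, Real.rpow_sub_one hr.ne', ← hrs]
      field_simp
    rw [perpProj_grad he, hnx, hex, hPx, smul_smul, hc, one_smul]

theorem image_grad (he : ‖e‖ = 1) {γ α : ℝ} (hγ : 1 < γ) (hα0 : 0 < α) (hα1 : α < γ - 1) :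
    grad γ α e '' {x | ⟪e, x⟫_ℝ ∈ Ioo (-1 : ℝ) 1} = {y | perpProj e y ≠ 0} ∪ {0} := by
  have hbij := bijOn_grad he hγ hα0 hα1
  refine Subset.antisymm ?_ (union_subset ?_ ?_)
  · rintro _ ⟨x, hx, rfl⟩
    by_cases hPx : perpProj e x = 0
    · exact Or.inr (grad_eq_zero (by linarith) hPx)
    · exact Or.inl (hbij.mapsTo ⟨hx, hPx⟩)
  · exact hbij.surjOn.mono (fun x hx => hx.1) subset_rfl
  · rintro _ rfl
    refine ⟨0, by simp, grad_eq_zero (by linarith) (map_zero _)⟩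

end InnerProductSpace

section Coordinates

noncomputable def lastBasisVector (n : ℕ) (hn : 0 < n) : EuclideanSpace ℝ (Fin n) :=
  EuclideanSpace.single ⟨n - 1, by omega⟩ 1

variable {n : ℕ}

lemma norm_lastBasisVector (hn : 0 < n) : ‖lastBasisVector n hn‖ = 1 := by
  simp [lastBasisVector]

lemma lastCoord_eq_inner (hn : 3 ≤ n) (x : EuclideanSpace ℝ (Fin n)) :
    lastCoord n hn x = ⟪lastBasisVector n (by omega), x⟫_ℝ := by
  simp [lastCoord, lastBasisVector, EuclideanSpace.inner_single_left]

lemma lastBasisVector_apply (hn : 0 < n) (i : Fin n) :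
    lastBasisVector n hn i = if (i : ℕ) = n - 1 then 1 else 0 := by
  simp [lastBasisVector, PiLp.single_apply, Fin.ext_iff]

lemma perpProj_lastBasisVector_apply (hn : 0 < n) (x : EuclideanSpace ℝ (Fin n)) (i : Fin n) :
    perpProj (lastBasisVector n hn) x i = if (i : ℕ) = n - 1 then 0 else x i := by
  rw [perpProj_apply, PiLp.sub_apply, PiLp.smul_apply, lastBasisVector_apply, lastBasisVector,
    EuclideanSpace.inner_single_left]
  split_ifs with h
  · rw [show i = ⟨n - 1, by omega⟩ from Fin.ext h]
    simp
  · simp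

lemma primeNorm_eq_norm_perpProj (hn : 0 < n) (x : EuclideanSpace ℝ (Fin n)) :
    primeNorm n x = ‖perpProj (lastBasisVector n hn) x‖ := by
  rw [primeNorm, EuclideanSpace.norm_eq]
  congr 1
  refine Finset.sum_congr rfl fun i _ => ?_
  rw [perpProj_lastBasisVector_apply]
  split_ifs <;> simp

lemma perpProj_lastBasisVector_eq_zero_iff (hn : 0 < n) (x : EuclideanSpace ℝ (Fin n)) :
    perpProj (lastBasisVector n hn) x = 0 ↔ ∀ i : Fin n, (i : ℕ) ≠ n - 1 → x i = 0 := by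
  simp only [PiLp.ext_iff, perpProj_lastBasisVector_apply, PiLp.zero_apply, ite_eq_left_iff]

lemma uPog_eq (hn : 3 ≤ n) (α : ℝ) :
    uPog n hn α = fun x => ‖perpProj (lastBasisVector n (by omega)) x‖ ^ (2 - 2 / (n : ℝ)) *
      (1 - ⟪lastBasisVector n (by omega), x⟫_ℝ ^ 2) ^ (-α) := by
  funext x
  rw [uPog, hPog, primeNorm_eq_norm_perpProj (by omega), lastCoord_eq_inner]

lemma gradPog_eq (hn : 3 ≤ n) (α : ℝ) :
    gradPog n hn α = grad (2 - 2 / (n : ℝ)) α (lastBasisVector n (by omega)) := by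
  funext x
  ext i
  simp only [gradPog, grad, PiLp.toLp_apply, PiLp.add_apply, PiLp.smul_apply,
    perpProj_lastBasisVector_apply, lastBasisVector_apply, smul_eq_mul,
    primeNorm_eq_norm_perpProj (by omega : 0 < n), lastCoord_eq_inner hn]
  split_ifs <;> ring

lemma XPog_eq (hn : 3 ≤ n) :
    XPog n hn = {x | ⟪lastBasisVector n (by omega), x⟫_ℝ ∈ Ioo (-1 : ℝ) 1} := by
  simp only [XPog, lastCoord_eq_inner]

lemma setOf_exists_coord_ne_zero_eq (hn : 0 < n) :
    {y : EuclideanSpace ℝ (Fin n) | ∃ i : Fin n, (i : ℕ) ≠ n - 1 ∧ y i ≠ 0} =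
      {y | perpProj (lastBasisVector n hn) y ≠ 0} := by
  ext y
  simp [perpProj_lastBasisVector_eq_zero_iff]

end Coordinates

end Pogorelov

open Pogorelov

/-- **Appendix: gradient computation and gradient image of the Pogorelov-type example.**
For `n ≥ 3`, `γ = 2 − 2/n` and `0 < α < γ − 1`: (a) at points of `X = ℝ^{n−1} × (−1, 1)`
with `x' ≠ 0` the function `u` has the explicit gradient above; (b) at points with
`x' = 0` it is differentiable with vanishing gradient; (c) the gradient restricts to a
bijection from `X̂ = {x ∈ X : x' ≠ 0}` onto `Ŷ = (ℝ^{n−1} \ {0}) × ℝ`, and consequently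
the image of the gradient on `X` is `Ŷ ∪ {0}`. -/
theorem pogorelov_example_gradient
    (n : ℕ) (hn : 3 ≤ n) (α : ℝ) (hα0 : 0 < α) (hα1 : α < (2 - 2 / (n : ℝ)) - 1) :
    (∀ x ∈ XPog n hn, primeNorm n x ≠ 0 →
      HasGradientAt (uPog n hn α) (gradPog n hn α x) x) ∧
    (∀ x ∈ XPog n hn, (∀ i : Fin n, (i : ℕ) ≠ n - 1 → x i = 0) →
      HasGradientAt (uPog n hn α) 0 x) ∧
    Set.BijOn (gradPog n hn α) {x ∈ XPog n hn | primeNorm n x ≠ 0}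
      {y : EuclideanSpace ℝ (Fin n) | ∃ i : Fin n, (i : ℕ) ≠ n - 1 ∧ y i ≠ 0} ∧
    gradPog n hn α '' XPog n hn
      = {y : EuclideanSpace ℝ (Fin n) | ∃ i : Fin n, (i : ℕ) ≠ n - 1 ∧ y i ≠ 0} ∪ {0} := by
  have he := norm_lastBasisVector (n := n) (by omega)
  have hγ : 1 < 2 - 2 / (n : ℝ) := by
    have : 2 / (n : ℝ) < 1 := (div_lt_one (by positivity)).2 (by exact_mod_cast hn)
    linarith
  simp only [primeNorm_eq_norm_perpProj (by omega : 0 < n), norm_ne_zero_iff, uPog_eq hn,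
    gradPog_eq hn, XPog_eq hn, setOf_exists_coord_ne_zero_eq (by omega : 0 < n)]
  refine ⟨fun x hx _ => hasGradientAt_grad he hγ hx, fun x hx hx0 => ?_,
    bijOn_grad he hγ hα0 hα1, image_grad he hγ hα0 hα1⟩
  rw [← grad_eq_zero (α := α) (by linarith : (0 : ℝ) < 2 - 2 / n)
    ((perpProj_lastBasisVector_eq_zero_iff _ x).2 hx0)]
  exact hasGradientAt_grad he hγ hx
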